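/- Assume μ̂_t is square-integrable with E[μ̂_t] = μ_t and Var[μ̂_t] = σ_t²/n, and assume σ̂_t² is integrable with E[σ̂_t²] = ((n−1)/n)·σ_t². Then the expected squared Wasserstein-2 distance is bounded from below by E[W₂²] ≥ L(N,n), where L(N,n) = (σ_t − √((N/(N+n))·σ_s² + ((n−1)/(N+n))·σ_t²))² + (N/(N+n))²·(μ_t − μ_s)² + (n/(N+n)²)·σ_t². -/

import Mathlib

/-!
Write `W₂²(μ̄, σ̄²) = σ_t² + σ̄² - 2 σ_t σ̄ + (μ̄ - μ_t)²`. The terms `σ̄²` and `(μ̄ - μ_t)²` are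
integrated exactly: `E[σ̄²]` is the interpolated variance, and `E[(μ̄ - μ_t)²]` splits into the
squared bias `(N/(N+n))² (μ_t - μ_s)²` plus the variance `(n/(N+n))² σ_t²/n`. The only loss is in
the cross term, where Jensen's inequality for the concave square root gives
`E[σ̄] ≤ √(E[σ̄²])`, so that `σ_t² + E[σ̄²] - 2 σ_t E[σ̄] ≥ (σ_t - √(E[σ̄²]))²`.
-/

open MeasureTheory ProbabilityTheory Real

/-- The squared Wasserstein-2 distance between `𝒩(m, v)` and `𝒩(μ, σ²)`: `v` is a variance,
`σ` a standard deviation. -/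
noncomputable def gaussianW2Sq (m v μ σ : ℝ) : ℝ := σ ^ 2 + v - 2 * √v * σ + (m - μ) ^ 2

section

variable {Ω : Type*} [MeasurableSpace Ω] {P : Measure Ω}

lemma MeasureTheory.Integrable.memLp_two_sqrt {v : Ω → ℝ} (hv : Integrable v P)
    (hv0 : ∀ᵐ ω ∂P, 0 ≤ v ω) : MemLp (fun ω ↦ √(v ω)) 2 P := by
  refine (memLp_two_iff_integrable_sq
    (continuous_sqrt.comp_aestronglyMeasurable hv.aestronglyMeasurable)).2 (hv.congr ?_)
  filter_upwards [hv0] with ω h using (sq_sqrt h).symm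

variable [IsProbabilityMeasure P]

lemma integral_sqrt_le_sqrt_integral {v : Ω → ℝ} (hv : Integrable v P)
    (hv0 : ∀ᵐ ω ∂P, 0 ≤ v ω) : ∫ ω, √(v ω) ∂P ≤ √(∫ ω, v ω ∂P) :=
  strictConcaveOn_sqrt.concaveOn.le_map_integral continuous_sqrt.continuousOn isClosed_Ici hv0 hv
    ((hv.memLp_two_sqrt hv0).integrable one_le_two)

lemma integral_sq_eq_variance_add_sq {X : Ω → ℝ} (hX : MemLp X 2 P) :
    ∫ ω, X ω ^ 2 ∂P = variance X P + (∫ ω, X ω ∂P) ^ 2 := by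
  rw [variance_eq_sub hX]
  simp only [Pi.pow_apply]
  ring

lemma integral_const_add_mul_sub_sq {X : Ω → ℝ} (hX : MemLp X 2 P) (a b μ : ℝ) :
    ∫ ω, (a + b * X ω - μ) ^ 2 ∂P = b ^ 2 * variance X P + (a + b * ∫ ω, X ω ∂P - μ) ^ 2 := by
  have hbX : MemLp (fun ω ↦ b * X ω) 2 P := hX.const_mul b
  have hY : MemLp (fun ω ↦ a - μ + b * X ω) 2 P := (memLp_const (a - μ)).add hbX
  simp_rw [add_sub_right_comm a, integral_sq_eq_variance_add_sq hY,
    variance_const_add hbX.aestronglyMeasurable, variance_const_mul]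
  rw [integral_add (integrable_const _) (hbX.integrable one_le_two), integral_const,
    integral_const_mul, probReal_univ, one_smul]

lemma sq_sub_sqrt_integral_add_integral_sq_le_integral_gaussianW2Sq {m v : Ω → ℝ} (μ : ℝ) {σ : ℝ}
    (hσ : 0 ≤ σ) (hm : MemLp m 2 P) (hv : Integrable v P) (hv0 : ∀ᵐ ω ∂P, 0 ≤ v ω) :
    (σ - √(∫ ω, v ω ∂P)) ^ 2 + ∫ ω, (m ω - μ) ^ 2 ∂P
      ≤ ∫ ω, gaussianW2Sq (m ω) (v ω) μ σ ∂P := by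
  have hsqrt := (hv.memLp_two_sqrt hv0).integrable one_le_two
  have hdev : Integrable (fun ω ↦ (m ω - μ) ^ 2) P := (hm.sub (memLp_const μ)).integrable_sq
  have hsplit : ∫ ω, gaussianW2Sq (m ω) (v ω) μ σ ∂P
      = σ ^ 2 + ∫ ω, v ω ∂P - 2 * (∫ ω, √(v ω) ∂P) * σ + ∫ ω, (m ω - μ) ^ 2 ∂P := by
    have hconst_add : Integrable (fun ω ↦ σ ^ 2 + v ω) P := (integrable_const _).add hv
    have hcross : Integrable (fun ω ↦ 2 * √(v ω) * σ) P := (hsqrt.const_mul 2).mul_const σ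
    simp only [gaussianW2Sq]
    rw [integral_add (f := fun ω ↦ σ ^ 2 + v ω - 2 * √(v ω) * σ) (hconst_add.sub hcross) hdev,
      integral_sub hconst_add hcross, integral_add (integrable_const _) hv, integral_mul_const, integral_const_mul,
      integral_const, probReal_univ, one_smul]
  have hjensen := mul_le_mul_of_nonneg_left (integral_sqrt_le_sqrt_integral hv hv0) hσ
  rw [hsplit, sub_sq, sq_sqrt (integral_nonneg_of_ae hv0)]
  linarith

end

theorem wasserstein_expected_lower_bound_general
    {Ω : Type*} [MeasureSpace Ω] [IsProbabilityMeasure (ℙ : Measure Ω)]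
    (μs μt σs σt N : ℝ) (n : ℕ)
    (hσt : 0 < σt) (hn : 2 ≤ n) (hN : 0 ≤ N)
    (μthat σt2hat : Ω → ℝ)
    (hμL2 : MemLp μthat 2 ℙ)
    (hμmean : ∫ ω, μthat ω = μt)
    (hμvar : variance μthat ℙ = σt ^ 2 / n)
    (hσint : Integrable σt2hat ℙ)
    (hσnonneg : ∀ᵐ ω ∂(ℙ : Measure Ω), 0 ≤ σt2hat ω)
    (hσmean : ∫ ω, σt2hat ω = (((n : ℝ) - 1) / n) * σt ^ 2) :
    (σt - Real.sqrt (N / (N + n) * σs ^ 2 + ((n : ℝ) - 1) / (N + n) * σt ^ 2)) ^ 2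
        + (N / (N + n)) ^ 2 * (μt - μs) ^ 2 + (n : ℝ) / (N + n) ^ 2 * σt ^ 2
      ≤ ∫ ω,
          (σt ^ 2 + (N / (N + n) * σs ^ 2 + (n : ℝ) / (N + n) * σt2hat ω)
            - 2 * Real.sqrt (N / (N + n) * σs ^ 2 + (n : ℝ) / (N + n) * σt2hat ω) * σt
            + ((N / (N + n) * μs + (n : ℝ) / (N + n) * μthat ω) - μt) ^ 2) := by
  have hn_pos : (0 : ℝ) < n := by exact_mod_cast (show 0 < n by omega)
  have hNn : N + n ≠ 0 := by positivity
  have hvar_mean : ∫ ω, (N / (N + n) * σs ^ 2 + n / (N + n) * σt2hat ω)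
      = N / (N + n) * σs ^ 2 + ((n : ℝ) - 1) / (N + n) * σt ^ 2 := by
    rw [integral_add (integrable_const _) (hσint.const_mul _), integral_const, integral_const_mul,
      hσmean, probReal_univ, one_smul]
    field_simp
  have hmse : ∫ ω, (N / (N + n) * μs + n / (N + n) * μthat ω - μt) ^ 2
      = (N / (N + n)) ^ 2 * (μt - μs) ^ 2 + (n : ℝ) / (N + n) ^ 2 * σt ^ 2 := by
    rw [integral_const_add_mul_sub_sq hμL2, hμvar, hμmean]
    field_simp
    ring
  have hvar_nonneg : ∀ᵐ ω ∂(ℙ : Measure Ω), 0 ≤ N / (N + n) * σs ^ 2 + n / (N + n) * σt2hat ω := by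
    filter_upwards [hσnonneg] with ω h
    positivity
  have hμbar : MemLp (fun ω ↦ N / (N + n) * μs + n / (N + n) * μthat ω) 2 ℙ :=
    (memLp_const (N / (N + n) * μs)).add (hμL2.const_mul (n / (N + n)))
  have hvar_int : Integrable (fun ω ↦ N / (N + n) * σs ^ 2 + n / (N + n) * σt2hat ω) ℙ :=
    (integrable_const (N / (N + n) * σs ^ 2)).add (hσint.const_mul (n / (N + n)))
  have hbound := sq_sub_sqrt_integral_add_integral_sq_le_integral_gaussianW2Sq μt hσt.le
    hμbar hvar_int hvar_nonneg
  rw [hvar_mean, hmse, ← add_assoc] at hbound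
  exact hbound

/-- Lower bound of Proposition 1: the expected squared Wasserstein-2 distance
between the Gaussian with interpolated statistics `(μ̄, σ̄²)` and the Gaussian
with target statistics `(μ_t, σ_t²)` is bounded below by `L(N, n)`. -/
theorem wasserstein_expected_lower_bound
    {Ω : Type*} [MeasureSpace Ω] [IsProbabilityMeasure (ℙ : Measure Ω)]
    (μs μt σs σt N : ℝ) (n : ℕ)
    (hσs : 0 < σs) (hσt : 0 < σt) (hn : 2 ≤ n) (hN : 0 ≤ N)
    (μthat σt2hat : Ω → ℝ)
    (hμL2 : MemLp μthat 2 ℙ)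
    (hμmean : ∫ ω, μthat ω = μt)
    (hμvar : variance μthat ℙ = σt ^ 2 / n)
    (hσint : Integrable σt2hat ℙ)
    (hσnonneg : ∀ᵐ ω ∂(ℙ : Measure Ω), 0 ≤ σt2hat ω)
    (hσmean : ∫ ω, σt2hat ω = (((n : ℝ) - 1) / n) * σt ^ 2) :
    (σt - Real.sqrt (N / (N + n) * σs ^ 2 + ((n : ℝ) - 1) / (N + n) * σt ^ 2)) ^ 2
        + (N / (N + n)) ^ 2 * (μt - μs) ^ 2 + (n : ℝ) / (N + n) ^ 2 * σt ^ 2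
      ≤ ∫ ω,
          (σt ^ 2 + (N / (N + n) * σs ^ 2 + (n : ℝ) / (N + n) * σt2hat ω)
            - 2 * Real.sqrt (N / (N + n) * σs ^ 2 + (n : ℝ) / (N + n) * σt2hat ω) * σt
            + ((N / (N + n) * μs + (n : ℝ) / (N + n) * μthat ω) - μt) ^ 2) :=
  wasserstein_expected_lower_bound_general μs μt σs σt N n hσt hn hN μthat σt2hat hμL2 hμmean hμvar
    hσint hσnonneg hσmean
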